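/- Let U ⊂ ℝ^n be compact containing 0 in its convex hull, let V be the closed unit ℓ₂-ball of ℝ^d, let Θ be the gauge of {u vᵀ : u ∈ U, v ∈ V} on ℝ^{n×d}, and let γ_{P_U} be the gauge of the closed convex hull of {u uᵀ : u ∈ U} ∪ {0} in the symmetric matrices. Then for every X ∈ ℝ^{n×d}, Θ(X) = min over all factorizations X = U' V'ᵀ (U' ∈ ℝ^{n×r}, V' ∈ ℝ^{d×r}, r arbitrary) of (1/2) tr(V' V'ᵀ) + (1/2) γ_{P_U}(U' U'ᵀ). -/

import Mathlib

/-!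
Both sides are read off decompositions `X = ∑ λₘ uₘ vₘᵀ`. Such a decomposition gives the
factorization `U' = [√λₘ uₘ]`, `V' = [√λₘ vₘ]`, of value at most `∑ λₘ`. Conversely, for
`X = U' V'ᵀ` write `U' U'ᵀ = ∑ λₘ uₘ uₘᵀ = A Aᵀ` with `A = [√λₘ uₘ]` and
`∑ λₘ = γ_{P_U}(U' U'ᵀ)`; the gauge of a compact convex set is attained, and the convex hull of a
compact set is compact by Carathéodory. Equal Gram matrices give `U' = A Q` with `Q` a contraction,
so `X = ∑ uₘ (√λₘ wₘ)ᵀ` for the rows `wₘ` of `Q V'ᵀ`, and by AM-GM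
`Θ(X) ≤ ∑ √λₘ ‖wₘ‖ ≤ (∑ λₘ + ‖Q V'ᵀ‖²_F) / 2 ≤ (γ_{P_U}(U' U'ᵀ) + tr(V' V'ᵀ)) / 2`.
The minimum is attained since `Θ` is itself the gauge of the compact set `conv({0} ∪ {u vᵀ})`.
-/

open Matrix Set ENNReal NNReal Pointwise

noncomputable section

/-- The closed convex hull of `C ∪ {0}`. -/
def cvx {E : Type*} [AddCommGroup E] [Module ℝ E] [TopologicalSpace E] (C : Set E) : Set E :=
  closure (convexHull ℝ (insert 0 C))

/-- The (possibly infinite) gauge of the closed convex hull of `C ∪ {0}`. -/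
def gaugeE {E : Type*} [AddCommGroup E] [Module ℝ E] [TopologicalSpace E] (C : Set E) (x : E) :
    ℝ≥0∞ :=
  ⨅ (r : ℝ≥0) (_ : x ∈ (r : ℝ) • cvx C), (r : ℝ≥0∞)

/-- `P_U = {u uᵀ : u ∈ U}`. -/
def PU {n : ℕ} (U : Set (Fin n → ℝ)) : Set (Matrix (Fin n) (Fin n) ℝ) :=
  (fun u => vecMulVec u u) '' U

/-- `Θ(X)`: the gauge of `{u vᵀ : u ∈ U, v ∈ V}`. -/
def Theta {n d : ℕ} (U : Set (Fin n → ℝ)) (V : Set (Fin d → ℝ))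
    (X : Matrix (Fin n) (Fin d) ℝ) : ℝ≥0∞ :=
  sInf {t : ℝ≥0∞ | ∃ (r : ℕ) (lam : Fin r → ℝ) (u : Fin r → Fin n → ℝ)
    (v : Fin r → Fin d → ℝ),
    (∀ m, 0 ≤ lam m) ∧ (∀ m, u m ∈ U) ∧ (∀ m, v m ∈ V) ∧
    X = ∑ m, lam m • vecMulVec (u m) (v m) ∧ t = ENNReal.ofReal (∑ m, lam m)}

section ConvexHull

variable {E : Type*} [AddCommGroup E] [Module ℝ E]

theorem sum_smul_mem_smul_convexHull_insert_zero {ι : Type*} [Fintype ι] {A : Set E}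
    {w : ι → ℝ} {a : ι → E} (hw : ∀ m, 0 ≤ w m) (ha : ∀ m, a m ∈ A) :
    ∑ m, w m • a m ∈ (∑ m, w m) • convexHull ℝ (insert 0 A) := by
  rcases (Finset.sum_nonneg fun m _ => hw m).eq_or_lt with hzero | hpos
  · have hw0 : ∀ m, w m = 0 := fun m =>
      (Finset.sum_eq_zero_iff_of_nonneg fun m _ => hw m).mp hzero.symm m (Finset.mem_univ m)
    simp only [hw0, zero_smul, Finset.sum_const_zero]
    exact zero_mem_smul_set (subset_convexHull ℝ _ (mem_insert 0 A))
  · refine ⟨Finset.univ.centerMass w a, ?_, ?_⟩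
    · exact convexHull_mono (subset_insert 0 A)
        (Finset.univ.centerMass_mem_convexHull (fun m _ => hw m) hpos fun m _ => ha m)
    · simp only [Finset.centerMass, smul_inv_smul₀ hpos.ne']

theorem exists_sum_smul_of_mem_smul_convexHull_insert_zero {A : Set E} {c : ℝ} (hc : 0 ≤ c)
    {x : E} (hx : x ∈ c • convexHull ℝ (insert 0 A)) :
    ∃ (k : ℕ) (w : Fin k → ℝ) (a : Fin k → E), (∀ m, 0 ≤ w m) ∧ (∀ m, a m ∈ A) ∧
      ∑ m, w m ≤ c ∧ x = ∑ m, w m • a m := by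
  obtain ⟨y, hy, rfl⟩ := hx
  rcases A.eq_empty_or_nonempty with rfl | hA
  · rw [insert_empty_eq, convexHull_singleton, mem_singleton_iff] at hy
    exact ⟨0, ![], ![], nofun, nofun, by simpa using hc, by simp [hy]⟩
  rw [convexHull_insert hA, convexJoin_singleton_left, mem_iUnion₂] at hy
  obtain ⟨b, hb, s, t, hs, ht, hst, rfl⟩ := hy
  obtain ⟨ι, _, v, z, hv, hv1, hz, rfl⟩ := mem_convexHull_iff_exists_fintype.mp hb
  let e := (Fintype.equivFin ι).symm
  refine ⟨Fintype.card ι, fun m => c * t * v (e m), fun m => z (e m),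
    fun m => by have := hv (e m); positivity, fun m => hz (e m), ?_, ?_⟩
  · rw [e.sum_comp (fun i => c * t * v i), ← Finset.mul_sum, hv1, mul_one]
    exact mul_le_of_le_one_right hc (by linarith)
  · rw [e.sum_comp (fun i => (c * t * v i) • z i)]
    simp [Finset.smul_sum, smul_smul, mul_assoc]

end ConvexHull

theorem IsCompact.convexHull {E : Type*} [AddCommGroup E] [Module ℝ E] [TopologicalSpace E]
    [ContinuousAdd E] [ContinuousSMul ℝ E] [FiniteDimensional ℝ E] {s : Set E}
    (hs : IsCompact s) : IsCompact (convexHull ℝ s) := by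
  let combination (k : ℕ) (p : (Fin k → ℝ) × (Fin k → E)) : E := ∑ i, p.1 i • p.2 i
  have hcover : _root_.convexHull ℝ s = ⋃ k ∈ Finset.range (Module.finrank ℝ E + 2),
      combination k '' (stdSimplex ℝ (Fin k) ×ˢ univ.pi fun _ => s) := by
    refine Subset.antisymm (fun x hx => ?_) (iUnion₂_subset fun k _ => ?_)
    · -- Carathéodory: at most `finrank + 1` points are needed.
      obtain ⟨ι, _, z, w, hzs, hz, hw, hw1, rfl⟩ := eq_pos_convex_span_of_mem_convexHull hx
      have hcard : Fintype.card ι < Module.finrank ℝ E + 2 :=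
        Nat.lt_succ_of_le (hz.card_le_finrank_succ.trans
          (Nat.succ_le_succ (Submodule.finrank_le _)))
      let e := (Fintype.equivFin ι).symm
      refine mem_iUnion₂.mpr ⟨_, Finset.mem_range.mpr hcard, (w ∘ e, z ∘ e),
        ⟨⟨fun i => (hw _).le, ?_⟩, fun i _ => hzs (mem_range_self _)⟩, ?_⟩
      · exact (e.sum_comp w).trans hw1
      · exact e.sum_comp fun i => w i • z i
    · rintro _ ⟨⟨w, z⟩, ⟨⟨hw, hw1⟩, hz⟩, rfl⟩
      exact mem_convexHull_of_exists_fintype w z hw hw1 (fun i => hz i trivial) rfl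
  rw [hcover]
  exact (Finset.range _).isCompact_biUnion fun k _ =>
    ((isCompact_stdSimplex ℝ (Fin k)).prod (isCompact_univ_pi fun _ => hs)).image
      (by fun_prop)

theorem IsCompact.isClosed_setOf_mem_smul {E : Type*} [AddCommGroup E] [Module ℝ E]
    [TopologicalSpace E] [ContinuousSMul ℝ E] [T1Space E] {K : Set E} (hK : IsCompact K) (x : E) :
    IsClosed {r : ℝ≥0 | x ∈ (r : ℝ) • K} := by
  have : CompactSpace K := isCompact_iff_compactSpace.mp hK
  convert isClosedMap_fst_of_compactSpace _ ((isClosed_singleton (x := x)).preimage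
    (by fun_prop : Continuous fun p : ℝ≥0 × K => (p.1 : ℝ) • (p.2 : E))) using 1
  ext r
  simp [mem_smul_set]

theorem exists_mem_smul_cvx_gaugeE_eq {E : Type*} [AddCommGroup E] [Module ℝ E]
    [TopologicalSpace E] [ContinuousSMul ℝ E] [T1Space E] {C : Set E} (hC : IsCompact (cvx C))
    {x : E} (hx : gaugeE C x ≠ ⊤) : ∃ r : ℝ≥0, x ∈ (r : ℝ) • cvx C ∧ gaugeE C x = r := by
  set T := {r : ℝ≥0 | x ∈ (r : ℝ) • cvx C}
  have hT : T.Nonempty := by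
    contrapose! hx
    simp only [gaugeE, iInf_eq_top, ENNReal.coe_ne_top]
    exact fun r hr => (hx.subset hr : r ∈ (∅ : Set ℝ≥0))
  refine ⟨sInf T, (hC.isClosed_setOf_mem_smul x).csInf_mem hT (OrderBot.bddBelow T), ?_⟩
  exact (ENNReal.coe_sInf hT).symm

section GaugeE

variable {E : Type*} [AddCommGroup E] [Module ℝ E] [TopologicalSpace E]

theorem gaugeE_sum_smul_le {ι : Type*} [Fintype ι] {C : Set E} {w : ι → ℝ} {a : ι → E}
    (hw : ∀ m, 0 ≤ w m) (ha : ∀ m, a m ∈ C) :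
    gaugeE C (∑ m, w m • a m) ≤ ENNReal.ofReal (∑ m, w m) := by
  have hsum : 0 ≤ ∑ m, w m := Finset.sum_nonneg fun m _ => hw m
  refine iInf₂_le (∑ m, w m).toNNReal ?_
  rw [Real.coe_toNNReal _ hsum]
  exact smul_set_mono subset_closure (sum_smul_mem_smul_convexHull_insert_zero hw ha)

theorem exists_sum_smul_eq_of_gaugeE_ne_top [ContinuousAdd E] [ContinuousSMul ℝ E] [T2Space E]
    [FiniteDimensional ℝ E] {C : Set E} (hC : IsCompact C) {x : E} (hx : gaugeE C x ≠ ⊤) :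
    ∃ (k : ℕ) (w : Fin k → ℝ) (a : Fin k → E), (∀ m, 0 ≤ w m) ∧ (∀ m, a m ∈ C) ∧
      x = ∑ m, w m • a m ∧ ENNReal.ofReal (∑ m, w m) ≤ gaugeE C x := by
  have hhull : IsCompact (convexHull ℝ (insert 0 C)) := (hC.insert 0).convexHull
  have hcvx : cvx C = convexHull ℝ (insert 0 C) := hhull.isClosed.closure_eq
  obtain ⟨r, hr, hgauge⟩ := exists_mem_smul_cvx_gaugeE_eq (hcvx ▸ hhull) hx
  rw [hcvx] at hr
  obtain ⟨k, w, a, hw, ha, hle, rfl⟩ :=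
    exists_sum_smul_of_mem_smul_convexHull_insert_zero r.coe_nonneg hr
  refine ⟨k, w, a, hw, ha, rfl, ?_⟩
  rw [hgauge, ← ENNReal.ofReal_coe_nnreal]
  exact ENNReal.ofReal_le_ofReal hle

end GaugeE

theorem LinearMap.exists_comp_eq_of_norm_le {E F G : Type*} [AddCommGroup E] [Module ℝ E]
    [NormedAddCommGroup F] [InnerProductSpace ℝ F] [FiniteDimensional ℝ F] [NormedAddCommGroup G]
    [Module ℝ G] (S : E →ₗ[ℝ] F) (T : E →ₗ[ℝ] G)
    (h : ∀ x, ‖T x‖ ≤ ‖S x‖) : ∃ R : F →ₗ[ℝ] G, R ∘ₗ S = T ∧ ∀ y, ‖R y‖ ≤ ‖y‖ := by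
  obtain ⟨g, hg⟩ := S.rangeRestrict.exists_rightInverse_of_surjective S.range_rangeRestrict
  have hSg : ∀ y, S (g y) = y := fun y => congrArg Subtype.val (LinearMap.congr_fun hg y)
  have hTg : ∀ x, T (g ⟨S x, mem_range_self S x⟩) = T x := by
    intro x
    have := h (g ⟨S x, mem_range_self S x⟩ - x)
    rwa [map_sub, map_sub, hSg, sub_self, norm_zero, norm_le_zero_iff, sub_eq_zero] at this
  let P := (range S).orthogonalProjectionOnto
  refine ⟨T ∘ₗ g ∘ₗ P.toLinearMap, LinearMap.ext fun x => ?_, fun y => ?_⟩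
  · have hP : P (S x) = ⟨S x, mem_range_self S x⟩ :=
      (range S).orthogonalProjectionOnto_mem_subspace_eq_self ⟨S x, mem_range_self S x⟩
    simpa [hP] using hTg x
  · calc ‖T (g (P y))‖ ≤ ‖S (g (P y))‖ := h _
      _ = ‖(P y : F)‖ := by rw [hSg]
      _ ≤ ‖y‖ := (range S).norm_orthogonalProjectionOnto_apply_le y

section DotProduct

variable {ι : Type*} [Fintype ι]

theorem norm_toLp_sq (x : ι → ℝ) : ‖(WithLp.toLp 2 x : EuclideanSpace ℝ ι)‖ ^ 2 = x ⬝ᵥ x := by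
  rw [← real_inner_self_eq_norm_sq, EuclideanSpace.inner_toLp_toLp, star_trivial]

theorem dotProduct_self_nonneg (x : ι → ℝ) : 0 ≤ x ⬝ᵥ x :=
  Finset.sum_nonneg fun i _ => mul_self_nonneg (x i)

theorem isCompact_setOf_dotProduct_self_le_one : IsCompact {v : ι → ℝ | v ⬝ᵥ v ≤ 1} := by
  convert (isCompact_closedBall (0 : EuclideanSpace ℝ ι) 1).image (PiLp.continuous_ofLp 2 _)
  ext v
  change v ⬝ᵥ v ≤ 1 ↔ _
  rw [← norm_toLp_sq, sq_le_one_iff₀ (norm_nonneg _)]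
  exact ⟨fun h => ⟨_, by simpa using h, rfl⟩, by rintro ⟨x, hx, rfl⟩; simpa using hx⟩

end DotProduct

namespace Matrix

variable {ι κ : Type*}

theorem norm_toLp_mulVec_transpose_sq [Fintype ι] [Fintype κ] (C : Matrix ι κ ℝ) (x : ι → ℝ) :
    ‖(WithLp.toLp 2 (Cᵀ *ᵥ x) : EuclideanSpace ℝ κ)‖ ^ 2 = x ⬝ᵥ (C * Cᵀ) *ᵥ x := by
  rw [norm_toLp_sq, ← mulVec_mulVec, dotProduct_mulVec, vecMul_transpose, dotProduct_comm]

open scoped Matrix.Norms.L2Operator in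
theorem exists_mul_eq_of_mul_transpose_eq {k p : Type*} [Fintype ι] [Fintype k] [Fintype p]
    [DecidableEq ι] [DecidableEq k] [DecidableEq p] (A : Matrix ι k ℝ) (B : Matrix ι p ℝ)
    (h : A * Aᵀ = B * Bᵀ) :
    ∃ Q : Matrix k p ℝ, A * Q = B ∧ ∀ y, (Q *ᵥ y) ⬝ᵥ (Q *ᵥ y) ≤ y ⬝ᵥ y := by
  have hnorm : ∀ x, ‖toEuclideanLin Bᵀ x‖ ≤ ‖toEuclideanLin Aᵀ x‖ := fun x => by
    refine le_of_eq ((sq_eq_sq₀ (norm_nonneg _) (norm_nonneg _)).mp ?_)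
    simp only [toLpLin_apply]
    rw [norm_toLp_mulVec_transpose_sq, norm_toLp_mulVec_transpose_sq, h]
  obtain ⟨R, hRS, hR⟩ := LinearMap.exists_comp_eq_of_norm_le _ _ hnorm
  set M := toEuclideanLin.symm R
  have hMA : M * Aᵀ = Bᵀ := toEuclideanLin.injective <| by
    rw [toLpLin_mul, LinearEquiv.apply_symm_apply, hRS]
  have hM : ‖Mᵀ‖ ≤ 1 := by
    rw [← conjTranspose_eq_transpose_of_trivial, l2_opNorm_conjTranspose, l2_opNorm_def]
    exact ContinuousLinearMap.opNorm_le_bound _ zero_le_one fun y => by simpa [M] using hR y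
  refine ⟨Mᵀ, by simpa using congrArg transpose hMA, fun y => ?_⟩
  have := (l2_opNorm_mulVec Mᵀ (WithLp.toLp 2 y)).trans (mul_le_of_le_one_left (norm_nonneg _) hM)
  rw [← norm_toLp_sq, ← norm_toLp_sq]
  exact pow_le_pow_left₀ (norm_nonneg _) this 2

theorem sum_dotProduct_mul_transpose_le {k r d : Type*} [Fintype k] [Fintype r] [Fintype d]
    {Q : Matrix k r ℝ} (hQ : ∀ y, (Q *ᵥ y) ⬝ᵥ (Q *ᵥ y) ≤ y ⬝ᵥ y) (V' : Matrix d r ℝ) :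
    ∑ m, (Q * V'ᵀ) m ⬝ᵥ (Q * V'ᵀ) m ≤ (V' * V'ᵀ).trace :=
  calc ∑ m, (Q * V'ᵀ) m ⬝ᵥ (Q * V'ᵀ) m = ∑ j, (Q *ᵥ V' j) ⬝ᵥ (Q *ᵥ V' j) := by
        simp only [dotProduct]
        rw [Finset.sum_comm]
        rfl
    _ ≤ ∑ j, V' j ⬝ᵥ V' j := Finset.sum_le_sum fun j _ => hQ _
    _ = (V' * V'ᵀ).trace := rfl

theorem transpose_mul_eq_sum_vecMulVec {o R : Type*} [Fintype o] [NonUnitalNonAssocSemiring R]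
    (P : Matrix o ι R) (Q : Matrix o κ R) : Pᵀ * Q = ∑ m, vecMulVec (P m) (Q m) := by
  ext i j
  simp [mul_apply, Matrix.sum_apply, vecMulVec_apply]

section WeightedColumns

variable {k : ℕ}

def weightedColumns (w : Fin k → ℝ) (a : Fin k → ι → ℝ) : Matrix ι (Fin k) ℝ :=
  (Matrix.of fun m => √(w m) • a m)ᵀ

@[simp]
theorem transpose_weightedColumns_apply (w : Fin k → ℝ) (a : Fin k → ι → ℝ) (m : Fin k) :
    (weightedColumns w a)ᵀ m = √(w m) • a m :=
  rfl

theorem weightedColumns_mul (w : Fin k → ℝ) (a : Fin k → ι → ℝ) (W : Matrix (Fin k) κ ℝ) :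
    weightedColumns w a * W = ∑ m, vecMulVec (a m) (√(w m) • W m) := by
  rw [← transpose_transpose (weightedColumns w a), transpose_mul_eq_sum_vecMulVec]
  simp only [transpose_weightedColumns_apply, smul_vecMulVec, vecMulVec_smul]

theorem weightedColumns_mul_transpose {w : Fin k → ℝ} (hw : ∀ m, 0 ≤ w m) (a : Fin k → ι → ℝ)
    (b : Fin k → κ → ℝ) :
    weightedColumns w a * (weightedColumns w b)ᵀ = ∑ m, w m • vecMulVec (a m) (b m) := by
  rw [weightedColumns_mul]
  refine Finset.sum_congr rfl fun m _ => ?_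
  rw [transpose_weightedColumns_apply, smul_smul, Real.mul_self_sqrt (hw m), vecMulVec_smul]

theorem trace_weightedColumns_mul_transpose [Fintype ι] {w : Fin k → ℝ} (hw : ∀ m, 0 ≤ w m)
    (a : Fin k → ι → ℝ) :
    (weightedColumns w a * (weightedColumns w a)ᵀ).trace = ∑ m, w m * (a m ⬝ᵥ a m) := by
  simp [weightedColumns_mul_transpose hw, trace_sum, trace_vecMulVec]

end WeightedColumns

end Matrix

theorem exists_sum_vecMulVec_eq_of_theta_ne_top {n d : ℕ} {U : Set (Fin n → ℝ)}
    {V : Set (Fin d → ℝ)} (hU : IsCompact U) (hV : IsCompact V) {X : Matrix (Fin n) (Fin d) ℝ}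
    (hX : Theta U V X ≠ ⊤) :
    ∃ (k : ℕ) (w : Fin k → ℝ) (u : Fin k → Fin n → ℝ) (v : Fin k → Fin d → ℝ),
      (∀ m, 0 ≤ w m) ∧ (∀ m, u m ∈ U) ∧ (∀ m, v m ∈ V) ∧
      X = ∑ m, w m • vecMulVec (u m) (v m) ∧ ENNReal.ofReal (∑ m, w m) ≤ Theta U V X := by
  have hgauge : gaugeE (image2 vecMulVec U V) X ≤ Theta U V X := by
    refine le_sInf ?_
    rintro t ⟨k, w, u, v, hw, hu, hv, rfl, rfl⟩
    exact gaugeE_sum_smul_le hw fun m => mem_image2_of_mem (hu m) (hv m)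
  have hC : IsCompact (image2 vecMulVec U V) :=
    image_prod (vecMulVec (α := ℝ)) ▸ (hU.prod hV).image (by fun_prop)
  obtain ⟨k, w, a, hw, ha, rfl, hle⟩ :=
    exists_sum_smul_eq_of_gaugeE_ne_top hC (ne_top_of_le_ne_top hX hgauge)
  choose u hu v hv huv using ha
  exact ⟨k, w, u, v, hw, hu, hv, by simp only [huv], hle.trans hgauge⟩

theorem theta_sum_vecMulVec_le {n d k : ℕ} {U : Set (Fin n → ℝ)} {u : Fin k → Fin n → ℝ}
    (hu : ∀ m, u m ∈ U) (w : Fin k → Fin d → ℝ) :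
    Theta U {v | v ⬝ᵥ v ≤ 1} (∑ m, vecMulVec (u m) (w m)) ≤
      ENNReal.ofReal (∑ m, √(w m ⬝ᵥ w m)) := by
  set len : Fin k → ℝ := fun m => √(w m ⬝ᵥ w m)
  have hlen : ∀ m, len m * len m = w m ⬝ᵥ w m := fun m =>
    Real.mul_self_sqrt (dotProduct_self_nonneg (w m))
  refine sInf_le ⟨k, len, u, fun m => (len m)⁻¹ • w m, fun m => Real.sqrt_nonneg _, hu,
    fun m => ?_, Finset.sum_congr rfl fun m _ => ?_, rfl⟩
  · show (len m)⁻¹ • w m ⬝ᵥ (len m)⁻¹ • w m ≤ 1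
    rcases eq_or_ne (len m) 0 with h | h
    · simp [h]
    · rw [smul_dotProduct, dotProduct_smul, smul_eq_mul, smul_eq_mul, ← hlen,
        inv_mul_cancel_left₀ h, inv_mul_cancel₀ h]
  · rcases eq_or_ne (len m) 0 with h | h
    · have : w m = 0 := dotProduct_self_eq_zero.mp (by rw [← hlen, h, mul_zero])
      rw [h, zero_smul, this]
      ext
      simp [vecMulVec_apply]
    · rw [vecMulVec_smul, smul_smul, mul_inv_cancel₀ h, one_smul]

theorem theta_mul_transpose_le_of_eq_sum {n d r k : ℕ} {U : Set (Fin n → ℝ)} {w : Fin k → ℝ}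
    {u : Fin k → Fin n → ℝ} (hw : ∀ m, 0 ≤ w m) (hu : ∀ m, u m ∈ U)
    (U' : Matrix (Fin n) (Fin r) ℝ) (V' : Matrix (Fin d) (Fin r) ℝ)
    (hUU : U' * U'ᵀ = ∑ m, w m • vecMulVec (u m) (u m)) :
    Theta U {v | v ⬝ᵥ v ≤ 1} (U' * V'ᵀ) ≤
      ENNReal.ofReal ((∑ m, w m + (V' * V'ᵀ).trace) / 2) := by
  obtain ⟨Q, hAQ, hQ⟩ := exists_mul_eq_of_mul_transpose_eq (weightedColumns w u) U'
    (by rw [weightedColumns_mul_transpose hw, hUU])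
  set W := Q * V'ᵀ
  have hX : U' * V'ᵀ = ∑ m, vecMulVec (u m) (√(w m) • W m) := by
    rw [← hAQ, Matrix.mul_assoc, weightedColumns_mul]
  have hamgm : ∀ m, √((√(w m) • W m) ⬝ᵥ (√(w m) • W m)) ≤ (w m + W m ⬝ᵥ W m) / 2 := by
    intro m
    rw [smul_dotProduct, dotProduct_smul, smul_eq_mul, smul_eq_mul, ← mul_assoc,
      Real.mul_self_sqrt (hw m), Real.sqrt_mul (hw m)]
    nlinarith [two_mul_le_add_sq (√(w m)) (√(W m ⬝ᵥ W m)), Real.sq_sqrt (hw m),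
      Real.sq_sqrt (dotProduct_self_nonneg (W m))]
  rw [hX]
  refine (theta_sum_vecMulVec_le hu _).trans (ENNReal.ofReal_le_ofReal ?_)
  calc ∑ m, √((√(w m) • W m) ⬝ᵥ (√(w m) • W m))
      ≤ ∑ m, (w m + W m ⬝ᵥ W m) / 2 := Finset.sum_le_sum fun m _ => hamgm m
    _ = (∑ m, w m + ∑ m, W m ⬝ᵥ W m) / 2 := by rw [← Finset.sum_div, Finset.sum_add_distrib]
    _ ≤ (∑ m, w m + (V' * V'ᵀ).trace) / 2 := by
      gcongr
      exact sum_dotProduct_mul_transpose_le hQ V'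

theorem theta_mul_transpose_le {n d r : ℕ} {U : Set (Fin n → ℝ)} (hU : IsCompact U)
    (U' : Matrix (Fin n) (Fin r) ℝ) (V' : Matrix (Fin d) (Fin r) ℝ) :
    Theta U {v | v ⬝ᵥ v ≤ 1} (U' * V'ᵀ) ≤
      ENNReal.ofReal ((V' * V'ᵀ).trace) / 2 + gaugeE (PU U) (U' * U'ᵀ) / 2 := by
  rcases eq_or_ne (gaugeE (PU U) (U' * U'ᵀ)) ⊤ with htop | htop
  · simp [htop, ENNReal.top_div]
  obtain ⟨k, w, a, hw, ha, hUU, hle⟩ :=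
    exists_sum_smul_eq_of_gaugeE_ne_top (hU.image (by fun_prop)) htop
  choose u hu hua using ha
  simp only [← hua] at hUU
  have htr : 0 ≤ (V' * V'ᵀ).trace := Finset.sum_nonneg fun j _ => dotProduct_self_nonneg (V' j)
  calc _ ≤ ENNReal.ofReal ((∑ m, w m + (V' * V'ᵀ).trace) / 2) :=
        theta_mul_transpose_le_of_eq_sum hw hu U' V' hUU
    _ = ENNReal.ofReal ((V' * V'ᵀ).trace) / 2 + ENNReal.ofReal (∑ m, w m) / 2 := by
      rw [add_comm, add_div, ENNReal.ofReal_add (div_nonneg htr zero_le_two)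
        (div_nonneg (Finset.sum_nonneg fun m _ => hw m) zero_le_two),
        ENNReal.ofReal_div_of_pos two_pos, ENNReal.ofReal_div_of_pos two_pos, ENNReal.ofReal_ofNat]
    _ ≤ _ := by gcongr; exact hle

theorem exists_factorization_le {n d k : ℕ} {U : Set (Fin n → ℝ)} {w : Fin k → ℝ}
    {u : Fin k → Fin n → ℝ} {v : Fin k → Fin d → ℝ} (hw : ∀ m, 0 ≤ w m) (hu : ∀ m, u m ∈ U)
    (hv : ∀ m, v m ⬝ᵥ v m ≤ 1) :
    ∃ (U' : Matrix (Fin n) (Fin k) ℝ) (V' : Matrix (Fin d) (Fin k) ℝ),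
      U' * V'ᵀ = ∑ m, w m • vecMulVec (u m) (v m) ∧
      ENNReal.ofReal ((V' * V'ᵀ).trace) / 2 + gaugeE (PU U) (U' * U'ᵀ) / 2 ≤
        ENNReal.ofReal (∑ m, w m) := by
  refine ⟨weightedColumns w u, weightedColumns w v, weightedColumns_mul_transpose hw u v, ?_⟩
  have htr : (weightedColumns w v * (weightedColumns w v)ᵀ).trace ≤ ∑ m, w m := by
    rw [trace_weightedColumns_mul_transpose hw]
    exact Finset.sum_le_sum fun m _ => mul_le_of_le_one_right (hw m) (hv m)
  have hgauge : gaugeE (PU U) (weightedColumns w u * (weightedColumns w u)ᵀ) ≤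
      ENNReal.ofReal (∑ m, w m) := by
    rw [weightedColumns_mul_transpose hw]
    exact gaugeE_sum_smul_le hw fun m => mem_image_of_mem _ (hu m)
  calc _ ≤ ENNReal.ofReal (∑ m, w m) / 2 + ENNReal.ofReal (∑ m, w m) / 2 := by
        gcongr
    _ = ENNReal.ofReal (∑ m, w m) := ENNReal.add_halves _

theorem statement10_general {n d : ℕ} (U : Set (Fin n → ℝ)) (hU : IsCompact U)
    (X : Matrix (Fin n) (Fin d) ℝ) :
    Theta U {v : Fin d → ℝ | v ⬝ᵥ v ≤ 1} X =
      sInf {t : ℝ≥0∞ | ∃ (r : ℕ) (U' : Matrix (Fin n) (Fin r) ℝ)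
        (V' : Matrix (Fin d) (Fin r) ℝ), X = U' * V'ᵀ ∧
        t = ENNReal.ofReal ((V' * V'ᵀ).trace) / 2 + gaugeE (PU U) (U' * U'ᵀ) / 2} ∧
    (∃ (r : ℕ) (U' : Matrix (Fin n) (Fin r) ℝ) (V' : Matrix (Fin d) (Fin r) ℝ),
      X = U' * V'ᵀ ∧
      Theta U {v : Fin d → ℝ | v ⬝ᵥ v ≤ 1} X =
        ENNReal.ofReal ((V' * V'ᵀ).trace) / 2 + gaugeE (PU U) (U' * U'ᵀ) / 2) := by
  refine ⟨le_antisymm (le_sInf ?_) (le_sInf ?_), ?_⟩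
  · rintro t ⟨r, U', V', rfl, rfl⟩
    exact theta_mul_transpose_le hU U' V'
  · rintro t ⟨k, w, u, v, hw, hu, hv, rfl, rfl⟩
    obtain ⟨U', V', hX, hle⟩ := exists_factorization_le hw hu hv
    exact le_trans (sInf_le ⟨k, U', V', hX.symm, rfl⟩) hle
  by_cases htop : Theta U {v : Fin d → ℝ | v ⬝ᵥ v ≤ 1} X = ⊤
  · refine ⟨d, X, 1, by simp, htop.trans (top_le_iff.mp ?_).symm⟩
    simpa [htop] using theta_mul_transpose_le hU X (1 : Matrix (Fin d) (Fin d) ℝ)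
  obtain ⟨k, w, u, v, hw, hu, hv, hX, hle⟩ := exists_sum_vecMulVec_eq_of_theta_ne_top hU
    isCompact_setOf_dotProduct_self_le_one htop
  obtain ⟨U', V', hUV, hF⟩ := exists_factorization_le hw hu hv
  have hXUV : X = U' * V'ᵀ := hX.trans hUV.symm
  exact ⟨k, U', V', hXUV, le_antisymm (hXUV ▸ theta_mul_transpose_le hU U' V') (hF.trans hle)⟩

/-- For `U` compact containing `0` in its convex hull and `V` the unit `ℓ₂`-ball,
`Θ(X)` is the minimum, over all factorizations `X = U' V'ᵀ`, of
`(1/2) tr(V' V'ᵀ) + (1/2) γ_{P_U}(U' U'ᵀ)`. -/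
theorem statement10 {n d : ℕ} (U : Set (Fin n → ℝ)) (hU : IsCompact U)
    (hU0 : (0 : Fin n → ℝ) ∈ convexHull ℝ U)
    (X : Matrix (Fin n) (Fin d) ℝ) :
    Theta U {v : Fin d → ℝ | v ⬝ᵥ v ≤ 1} X =
      sInf {t : ℝ≥0∞ | ∃ (r : ℕ) (U' : Matrix (Fin n) (Fin r) ℝ)
        (V' : Matrix (Fin d) (Fin r) ℝ), X = U' * V'ᵀ ∧
        t = ENNReal.ofReal ((V' * V'ᵀ).trace) / 2 + gaugeE (PU U) (U' * U'ᵀ) / 2} ∧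
    (∃ (r : ℕ) (U' : Matrix (Fin n) (Fin r) ℝ) (V' : Matrix (Fin d) (Fin r) ℝ),
      X = U' * V'ᵀ ∧
      Theta U {v : Fin d → ℝ | v ⬝ᵥ v ≤ 1} X =
        ENNReal.ofReal ((V' * V'ᵀ).trace) / 2 + gaugeE (PU U) (U' * U'ᵀ) / 2) :=
  statement10_general U hU X

end
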